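/- arXiv:2109.07948 — 10 statements merged into one kernel-verified Lean document; each statement's English description precedes it below -/
import Mathlib

section
/- The incomparability graph of a poset contains no induced cycle of length at least five. -/
/-!
Walk around an induced cycle `x₀, x₁, …` of length `l ≥ 5` in the incomparability graph.
Elements two apart are comparable, say `x₀ < x₂`. If `xᵢ < xᵢ₊₂`, then `xᵢ₊₁ < xᵢ₊₃`: the
comparable pair `xᵢ, xᵢ₊₃` must satisfy `xᵢ ≤ xᵢ₊₃`, since `xᵢ₊₃ ≤ xᵢ < xᵢ₊₂` would contradict
`xᵢ₊₂ ∥ xᵢ₊₃`, and then `xᵢ₊₃ ≤ xᵢ₊₁` would contradict `xᵢ ∥ xᵢ₊₁`. Hence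
`x₀ < x₂ < x₄ < ⋯ < x₂ₗ = x₀`.
-/

/-- The incomparability graph of a poset: edges are pairs of incomparable elements. -/
def incompGraph (V : Type*) [PartialOrder V] : SimpleGraph V where
  Adj a b := ¬ a ≤ b ∧ ¬ b ≤ a
  symm := ⟨by intro a b h; exact ⟨h.2, h.1⟩⟩
  loopless := ⟨by intro a h; exact h.1 le_rfl⟩

section IncompCycle

variable {V : Type*} [PartialOrder V]

theorem lt_of_lt_of_incompRel {a b c d : V} (hac : a < c) (hab : IncompRel (· ≤ ·) a b)
    (hcd : IncompRel (· ≤ ·) c d) (had : ¬ IncompRel (· ≤ ·) a d)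
    (hbd : ¬ IncompRel (· ≤ ·) b d) (hne : b ≠ d) : b < d := by
  have had' : a ≤ d := by
    by_contra h
    exact had ⟨h, fun hda => hcd.not_ge (hda.trans hac.le)⟩
  have hbd' : b ≤ d := by
    by_contra h
    exact hbd ⟨h, fun hdb => hab.not_le (had'.trans hdb)⟩
  exact hbd'.lt_of_ne hne

variable {y : ℕ → V} (hadj : ∀ i, IncompRel (· ≤ ·) (y i) (y (i + 1)))
  (hcomp₂ : ∀ i, ¬ IncompRel (· ≤ ·) (y i) (y (i + 2)))
  (hcomp₃ : ∀ i, ¬ IncompRel (· ≤ ·) (y i) (y (i + 3)))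
  (hne : ∀ i, y i ≠ y (i + 2))
include hadj hcomp₂ hcomp₃ hne

theorem strictMono_two_mul_of_lt (h₀ : y 0 < y 2) : StrictMono fun n => y (2 * n) := by
  have hstep : ∀ i, y i < y (i + 2) := by
    intro i
    induction i with
    | zero => exact h₀
    | succ i ih =>
      exact lt_of_lt_of_incompRel ih (hadj i) (hadj (i + 2)) (hcomp₃ i) (hcomp₂ (i + 1))
        (hne (i + 1))
  exact strictMono_nat_of_lt_succ fun n => hstep (2 * n)

theorem not_periodic_of_incompRel {l : ℕ} (hl : 0 < l) : ¬ Function.Periodic y l := by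
  intro hper
  have hcycle : y (2 * l) = y 0 := hper.nat_mul_eq 2
  rcases not_incompRel_iff_symmGen.mp (hcomp₂ 0) with h₀ | h₀
  · have hmono := strictMono_two_mul_of_lt hadj hcomp₂ hcomp₃ hne (h₀.lt_of_ne (hne 0))
    exact (hmono hl).ne hcycle.symm
  · have hmono := strictMono_two_mul_of_lt (y := fun i => OrderDual.toDual (y i))
      (fun i => (hadj i).symm) (fun i h => hcomp₂ i h.symm) (fun i h => hcomp₃ i h.symm)
      hne (h₀.lt_of_ne (hne 0).symm)
    exact (hmono hl).ne hcycle.symm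

end IncompCycle

theorem Nat.add_mod_eq_or {l k : ℕ} (i : ℕ) (hkl : k < l) :
    (i + k) % l = i % l + k ∨ (i + k) % l + l = i % l + k := by
  have hi : i % l < l := Nat.mod_lt i (by omega)
  rw [Nat.add_mod, Nat.mod_eq_of_lt hkl]
  by_cases h : i % l + k < l
  · exact Or.inl (Nat.mod_eq_of_lt h)
  · rw [Nat.mod_eq_sub_mod (by omega), Nat.mod_eq_of_lt (by omega)]
    omega

theorem cycle_adj_mod_iff {l k : ℕ} (i : ℕ) (hk : 0 < k) (hkl : k + 1 < l) :
    (i % l + 1 = (i + k) % l ∨ (i + k) % l + 1 = i % l ∨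
        (i % l = 0 ∧ (i + k) % l = l - 1) ∨ ((i + k) % l = 0 ∧ i % l = l - 1)) ↔ k = 1 := by
  have := Nat.add_mod_eq_or i (by omega : k < l)
  have := Nat.mod_lt i (by omega : 0 < l)
  have := Nat.mod_lt (i + k) (by omega : 0 < l)
  omega

theorem Nat.add_mod_ne {l k : ℕ} (i : ℕ) (hk : 0 < k) (hkl : k < l) : (i + k) % l ≠ i % l := by
  have := Nat.add_mod_eq_or i hkl
  have := Nat.mod_lt i (by omega : 0 < l)
  omega

theorem stmt1 {V : Type*} [PartialOrder V] (l : ℕ) (hl : 5 ≤ l) (x : Fin l → V)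
    (hinj : Function.Injective x) :
    ¬ (∀ i j : Fin l, (incompGraph V).Adj (x i) (x j) ↔
        ((i : ℕ) + 1 = j ∨ (j : ℕ) + 1 = i ∨
          ((i : ℕ) = 0 ∧ (j : ℕ) = l - 1) ∨ ((j : ℕ) = 0 ∧ (i : ℕ) = l - 1))) := by
  intro h
  have hl₀ : 0 < l := by omega
  set y : ℕ → V := fun i => x ⟨i % l, Nat.mod_lt i hl₀⟩
  have hadj : ∀ i k, 0 < k → k + 1 < l → (IncompRel (· ≤ ·) (y i) (y (i + k)) ↔ k = 1) :=
    fun i k hk hkl => (h _ _).trans (cycle_adj_mod_iff i hk hkl)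
  refine not_periodic_of_incompRel (fun i => (hadj i 1 one_pos (by omega)).2 rfl)
    (fun i => mt (hadj i 2 two_pos (by omega)).1 (by decide))
    (fun i => mt (hadj i 3 three_pos (by omega)).1 (by decide))
    (fun i he => Nat.add_mod_ne i two_pos (by omega) (congrArg Fin.val (hinj he)).symm) hl₀ ?_
  intro i
  simp only [y, Nat.add_mod_right]
end

section
/- Let P be a poset whose incomparability graph G is connected, and let a < b be a covering relation in P (i.e., a < b and there is no z with a < z < b). Then the graphic distance between a and b in G satisfies 2 ≤ d_G(a,b) ≤ 3. -/
namespace SimpleGraph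

variable {V : Type*} {G : SimpleGraph V} {u v x y : V}

theorem Reachable.exists_adj_mem_notMem (h : G.Reachable u v) {S : Set V} (hu : u ∈ S)
    (hv : v ∉ S) : ∃ x y, G.Adj x y ∧ x ∈ S ∧ y ∉ S := by
  obtain ⟨p⟩ := h
  obtain ⟨d, -, hd⟩ := p.exists_boundary_dart S hu hv
  exact ⟨d.fst, d.snd, d.adj, hd⟩

theorem dist_le_two_of_adj_of_adj (hux : G.Adj u x) (hxv : G.Adj x v) : G.dist u v ≤ 2 :=
  dist_le (.cons hux (.cons hxv .nil))

theorem dist_le_three_of_adj_of_adj_of_adj (hux : G.Adj u x) (hxy : G.Adj x y)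
    (hyv : G.Adj y v) : G.dist u v ≤ 3 :=
  dist_le (.cons hux (.cons hxy (.cons hyv .nil)))

end SimpleGraph

namespace incompGraph

variable {V : Type*} [PartialOrder V] {a b : V}

theorem not_adj_of_le (h : a ≤ b) : ¬ (incompGraph V).Adj a b :=
  fun hab => hab.1 h

theorem le_or_le_of_not_adj (h : ¬ (incompGraph V).Adj a b) : a ≤ b ∨ b ≤ a := by
  by_contra! hab
  exact h hab

theorem dist_le_three_of_covBy (hconn : (incompGraph V).Connected) (hcov : a ⋖ b) :
    (incompGraph V).dist a b ≤ 3 := by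
  set G := incompGraph V
  have ha : a ∉ {x | b ≤ x ∨ G.Adj b x} := by
    rintro (hba | hba)
    exacts [hcov.lt.not_ge hba, not_adj_of_le hcov.le hba.symm]
  obtain ⟨u, w, huw, hu, hw⟩ := (hconn b a).exists_adj_mem_notMem (.inl le_rfl) ha
  simp only [Set.mem_ofPred_eq, not_or] at hu hw
  obtain ⟨hbw, hnbw⟩ := hw
  have hwb : w < b := lt_of_le_not_ge ((le_or_le_of_not_adj hnbw).resolve_left hbw) hbw
  have hbu : G.Adj b u := hu.resolve_left fun hbu => huw.2 (hwb.le.trans hbu)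
  by_cases haw : G.Adj a w
  · exact SimpleGraph.dist_le_three_of_adj_of_adj_of_adj haw huw.symm hbu.symm
  have hwa : w ≤ a := by
    refine (le_or_le_of_not_adj haw).elim (fun hle => ?_) id
    by_contra hwa
    exact hcov.2 (lt_of_le_not_ge hle hwa) hwb
  have hau : G.Adj a u :=
    ⟨fun hau => huw.2 (hwa.trans hau), fun hua => hbu.2 (hua.trans hcov.le)⟩
  exact (SimpleGraph.dist_le_two_of_adj_of_adj hau hbu.symm).trans (by norm_num)

end incompGraph

theorem stmt2 {V : Type*} [PartialOrder V]
    (hconn : (incompGraph V).Connected) (a b : V) (hcov : a ⋖ b) :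
    2 ≤ (incompGraph V).dist a b ∧ (incompGraph V).dist a b ≤ 3 :=
  ⟨hconn.one_lt_dist_of_ne_of_not_adj hcov.ne (incompGraph.not_adj_of_le hcov.le),
    incompGraph.dist_le_three_of_covBy hconn hcov⟩
end

section
/- Let P be a poset and G its incomparability graph. A sequence a_0, a_1, a_2, ... of vertices forms an infinite induced path in G (with edges exactly between consecutive terms) if and only if for every i, the four vertices a_i, a_{i+1}, a_{i+2}, a_{i+3} form an induced path of G with extremities a_i and a_{i+3}. -/
open Function

lemma incompGraph_adj {V : Type*} [PartialOrder V] {x y : V} :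
    (incompGraph V).Adj x y ↔ IncompRel (· ≤ ·) x y := Iff.rfl

lemma lt_or_gt_of_not_incompGraph_adj {V : Type*} [PartialOrder V] {x y : V}
    (h : ¬ (incompGraph V).Adj x y) (hne : x ≠ y) : x < y ∨ y < x := by
  rw [incompGraph_adj, not_incompRel_iff_symmGen] at h
  exact h.imp (lt_of_le_of_ne · hne) (lt_of_le_of_ne · hne.symm)

section Zigzag

variable {V : Type*} {a : ℕ → V}

lemma lt_of_add_two_le_of_lt_two [Preorder V]
    (hadj : ∀ i, IncompRel (· ≤ ·) (a i) (a (i + 1)))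
    (h2 : ∀ i, a i < a (i + 2) ∨ a (i + 2) < a i)
    (h3 : ∀ i, a i < a (i + 3) ∨ a (i + 3) < a i)
    (h0 : a 0 < a 2) {i j : ℕ} (hij : i + 2 ≤ j) : a i < a j := by
  have two : ∀ i, a i < a (i + 2) := by
    intro i
    induction i with
    | zero => exact h0
    | succ i ih =>
      refine (h2 (i + 1)).resolve_right fun hlt => ?_
      rcases h3 i with h | h
      · exact (hadj i).not_lt (h.trans hlt)
      · exact (hadj (i + 2)).not_gt (h.trans ih)
  have three : ∀ i, a i < a (i + 3) := fun i =>
    (h3 i).resolve_right fun h => (hadj (i + 2)).not_gt (h.trans (two i))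
  obtain ⟨d, rfl⟩ := Nat.exists_eq_add_of_le hij
  clear hij
  induction d using Nat.twoStepInduction generalizing i with
  | zero => exact two i
  | one => exact three i
  | more d ih _ =>
    calc a i < a (i + 2) := two i
      _ < a (i + 2 + 2 + d) := ih (i := i + 2)
      _ = a (i + 2 + (d + 2)) := by rw [add_right_comm, add_assoc]

lemma lt_or_gt_of_add_two_le [Preorder V]
    (hadj : ∀ i, IncompRel (· ≤ ·) (a i) (a (i + 1)))
    (h2 : ∀ i, a i < a (i + 2) ∨ a (i + 2) < a i)
    (h3 : ∀ i, a i < a (i + 3) ∨ a (i + 3) < a i)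
    {i j : ℕ} (hij : i + 2 ≤ j) : a i < a j ∨ a j < a i := by
  rcases h2 0 with h0 | h0
  · exact .inl (lt_of_add_two_le_of_lt_two hadj h2 h3 h0 hij)
  · exact .inr (lt_of_add_two_le_of_lt_two (V := Vᵒᵈ) (fun i => (hadj i).symm)
      (fun i => (h2 i).symm) (fun i => (h3 i).symm) h0 hij)

lemma injective_of_lt_or_gt_of_add_two_le [Preorder V]
    (hadj : ∀ i, IncompRel (· ≤ ·) (a i) (a (i + 1)))
    (hcomp : ∀ {i j}, i + 2 ≤ j → a i < a j ∨ a j < a i) : Injective a := by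
  refine Injective.of_lt_imp_ne fun i j hij => ?_
  rcases (Nat.succ_le_of_lt hij).eq_or_lt with rfl | h
  · exact (hadj i).ne
  · exact (hcomp h).elim ne_of_lt ne_of_gt

lemma incompGraph_adj_iff_of_lt_or_gt_of_add_two_le [PartialOrder V]
    (hadj : ∀ i, IncompRel (· ≤ ·) (a i) (a (i + 1)))
    (hcomp : ∀ {i j}, i + 2 ≤ j → a i < a j ∨ a j < a i) (i j : ℕ) :
    (incompGraph V).Adj (a i) (a j) ↔ (i + 1 = j ∨ j + 1 = i) := by
  wlog hij : i ≤ j generalizing i j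
  · rw [(incompGraph V).adj_comm, this j i (by omega), or_comm]
  rcases hij.eq_or_lt with rfl | hij
  · exact iff_of_false ((incompGraph V).loopless.irrefl _) (by omega)
  rcases (Nat.succ_le_of_lt hij).eq_or_lt with rfl | h
  · exact iff_of_true (hadj i) (.inl rfl)
  · refine iff_of_false (fun h' => ?_) (by omega)
    rw [incompGraph_adj] at h'
    exact (hcomp h).elim h'.not_lt h'.not_gt

end Zigzag

theorem stmt3 {V : Type*} [PartialOrder V] (a : ℕ → V) :
    (Function.Injective a ∧
      ∀ i j : ℕ, (incompGraph V).Adj (a i) (a j) ↔ (i + 1 = j ∨ j + 1 = i)) ↔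
    (∀ i : ℕ, Function.Injective (fun k : Fin 4 => a (i + k)) ∧
      ∀ k l : Fin 4, (incompGraph V).Adj (a (i + k)) (a (i + l)) ↔
        ((k : ℕ) + 1 = l ∨ (l : ℕ) + 1 = k)) := by
  constructor
  · rintro ⟨hinj, hadj⟩ i
    refine ⟨fun k l hkl => Fin.ext (by simpa using hinj hkl), fun k l => ?_⟩
    rw [hadj]
    omega
  · intro h
    have hadj (i : ℕ) : IncompRel (· ≤ ·) (a i) (a (i + 1)) := ((h i).2 0 1).2 (by decide)
    have hfar (i : ℕ) (k l : Fin 4) (hkl : (k : ℕ) + 2 ≤ l) :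
        a (i + k) < a (i + l) ∨ a (i + l) < a (i + k) :=
      lt_or_gt_of_not_incompGraph_adj (mt ((h i).2 k l).1 (by omega))
        ((h i).1.ne (Fin.ne_of_val_ne (by omega)))
    have hcomp {i j : ℕ} (hij : i + 2 ≤ j) : a i < a j ∨ a j < a i :=
      lt_or_gt_of_add_two_le hadj (hfar · 0 2 (by decide)) (hfar · 0 3 (by decide)) hij
    exact ⟨injective_of_lt_or_gt_of_add_two_le hadj hcomp,
      incompGraph_adj_iff_of_lt_or_gt_of_add_two_le hadj hcomp⟩
end

section
/- Let P = (V, ≤) be a poset, G its incomparability graph, x ∈ V, and r ∈ ℕ. Then the ball B_G(x, r) = {y ∈ V : d_G(x, y) ≤ r} is an order convex subset of P. -/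
/-- A subset of a poset is order convex if it contains every element between two of its members. -/
def OrderConvex {V : Type*} [PartialOrder V] (X : Set V) : Prop :=
  ∀ x ∈ X, ∀ y ∈ X, ∀ z : V, x ≤ z → z ≤ y → z ∈ X

/-! If `z` is incomparable to `x`, it is a neighbour of `x`. Otherwise, say `a ≤ z ≤ x` with `a` in
the ball. Along a walk from `x` to `a`, the first vertex not above `z` cannot lie below `z`, being
adjacent to a vertex above `z`; so it is incomparable to `z` and is not `a`, whence `d(x, z) ≤ d(x, a)`.
The case `x ≤ z ≤ b` is the order dual. -/

namespace incompGraph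

variable {V : Type*} [PartialOrder V]

theorem edist_le_length_of_le_of_le {u v z : V} (p : (incompGraph V).Walk u v)
    (hvz : v ≤ z) (hzu : z ≤ u) : (incompGraph V).edist u z ≤ p.length := by
  induction p with
  | nil => simp [le_antisymm hzu hvz]
  | @cons u w v huw q ih =>
    rw [SimpleGraph.Walk.length_cons, Nat.cast_succ, add_comm]
    have hu : (incompGraph V).edist u w = 1 := SimpleGraph.edist_eq_one_iff_adj.2 huw
    by_cases hzw : z ≤ w
    · calc (incompGraph V).edist u z
          ≤ (incompGraph V).edist u w + (incompGraph V).edist w z := SimpleGraph.edist_triangle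
        _ ≤ 1 + q.length := by rw [hu]; gcongr; exact ih hvz hzw
    · have hwz : (incompGraph V).Adj w z := ⟨fun hwz => huw.2 (hwz.trans hzu), hzw⟩
      have hq : q.length ≠ 0 := fun h => hwz.1 (q.eq_of_length_eq_zero h ▸ hvz)
      calc (incompGraph V).edist u z
          ≤ (incompGraph V).edist u w + (incompGraph V).edist w z := SimpleGraph.edist_triangle
        _ = 1 + 1 := by rw [hu, SimpleGraph.edist_eq_one_iff_adj.2 hwz]
        _ ≤ 1 + q.length := by gcongr; exact_mod_cast Nat.one_le_iff_ne_zero.2 hq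

theorem edist_le_of_le_of_le {u v z : V} (hvz : v ≤ z) (hzu : z ≤ u) :
    (incompGraph V).edist u z ≤ (incompGraph V).edist u v :=
  le_iInf fun p => edist_le_length_of_le_of_le p hvz hzu

theorem orderDual : incompGraph Vᵒᵈ = incompGraph V := by
  ext a b
  exact and_comm

theorem edist_le_of_le_of_le' {u v z : V} (huz : u ≤ z) (hzv : z ≤ v) :
    (incompGraph V).edist u z ≤ (incompGraph V).edist u v := by
  have := edist_le_of_le_of_le (u := OrderDual.toDual u) (OrderDual.toDual_le_toDual.2 hzv)
    (OrderDual.toDual_le_toDual.2 huz)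
  rwa [orderDual] at this

end incompGraph

theorem stmt6 {V : Type*} [PartialOrder V] (x : V) (r : ℕ) :
    OrderConvex {y : V | (incompGraph V).edist x y ≤ (r : ℕ∞)} := by
  intro a ha b hb z haz hzb
  simp only [Set.mem_ofPred_eq] at ha hb ⊢
  by_cases hzx : z ≤ x
  · exact (incompGraph.edist_le_of_le_of_le haz hzx).trans ha
  by_cases hxz : x ≤ z
  · exact (incompGraph.edist_le_of_le_of_le' hxz hzb).trans hb
  have hr : r ≠ 0 := by
    rintro rfl
    obtain rfl : x = a := SimpleGraph.edist_eq_zero_iff.1 (nonpos_iff_eq_zero.1 ha)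
    exact hxz haz
  calc (incompGraph V).edist x z ≤ 1 :=
        SimpleGraph.edist_le_one_iff_adj_or_eq.2 (Or.inl ⟨hxz, hzx⟩)
    _ ≤ r := by exact_mod_cast Nat.one_le_iff_ne_zero.2 hr
end

section
/- Let P = (V, ≤) be a poset, G its incomparability graph, and x < z < y elements of V. Then max(d_G(x,z), d_G(z,y)) ≤ d_G(x,y) ≤ d_G(x,z) + d_G(z,y) ≤ d_G(x,y) + 2. -/
/-!
A walk from `x` to `y ≥ z > x` in the incomparability graph starts below `z` and ends outside
the down-set of `z`. At the first vertex `w` of the walk that is not below `z`, either `w = z`,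
and the walk splits at `z`, or `w` is incomparable to `z` (its predecessor lies below `z`), and
the detour `w → z → w` splits the walk at the cost of two extra edges. Applied to a geodesic
from `x` to `y`, this gives all three inequalities.
-/

namespace incompGraph

variable {V : Type*} [PartialOrder V]

lemma adj_of_lt_of_adj {a w z : V} (haz : a < z) (haw : (incompGraph V).Adj a w)
    (hwz : ¬ w < z) : (incompGraph V).Adj w z := by
  have hne : w ≠ z := by
    rintro rfl
    exact haw.1 haz.le
  exact ⟨fun h => hwz (h.lt_of_ne hne), fun h => haw.1 (haz.le.trans h)⟩

lemma exists_walks_through_of_walk {x y : V} (p : (incompGraph V).Walk x y) {z : V}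
    (hxz : x < z) (hzy : z ≤ y) :
    ∃ (q : (incompGraph V).Walk x z) (r : (incompGraph V).Walk z y),
      q.length ≤ p.length ∧ r.length ≤ p.length ∧ q.length + r.length ≤ p.length + 2 := by
  induction p with
  | nil => exact absurd (hxz.trans_le hzy) (lt_irrefl _)
  | @cons a w y haw p ih =>
    by_cases hwz : w < z
    · obtain ⟨q, r, hq, hr, hqr⟩ := ih hwz hzy
      refine ⟨.cons haw q, r, ?_, ?_, ?_⟩ <;> simp only [SimpleGraph.Walk.length_cons] <;> omega
    · have hadj := adj_of_lt_of_adj hxz haw hwz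
      have hp : p.length ≠ 0 := by
        intro h
        cases p.eq_of_length_eq_zero h
        exact hadj.2 hzy
      refine ⟨.cons haw (.cons hadj .nil), .cons hadj.symm p, ?_, ?_, ?_⟩ <;>
        simp only [SimpleGraph.Walk.length_cons, SimpleGraph.Walk.length_nil] <;> omega

end incompGraph

theorem stmt9_general {V : Type*} [PartialOrder V] (x z y : V)
    (hxz : x < z) (hzy : z < y)
    (hrxy : (incompGraph V).Reachable x y) :
    max ((incompGraph V).dist x z) ((incompGraph V).dist z y) ≤ (incompGraph V).dist x y ∧
    (incompGraph V).dist x y ≤ (incompGraph V).dist x z + (incompGraph V).dist z y ∧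
    (incompGraph V).dist x z + (incompGraph V).dist z y ≤ (incompGraph V).dist x y + 2 := by
  obtain ⟨p, hp⟩ := hrxy.exists_walk_length_eq_dist
  obtain ⟨q, r, hq, hr, hqr⟩ := incompGraph.exists_walks_through_of_walk p hxz hzy.le
  have hdq : (incompGraph V).dist x z ≤ q.length := SimpleGraph.dist_le q
  have hdr : (incompGraph V).dist z y ≤ r.length := SimpleGraph.dist_le r
  have htri := q.reachable.dist_triangle_left y
  exact ⟨max_le (by omega) (by omega), htri, by omega⟩

theorem stmt9 {V : Type*} [PartialOrder V] (x z y : V)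
    (hxz : x < z) (hzy : z < y)
    (hrxz : (incompGraph V).Reachable x z)
    (hrzy : (incompGraph V).Reachable z y)
    (hrxy : (incompGraph V).Reachable x y) :
    max ((incompGraph V).dist x z) ((incompGraph V).dist z y) ≤ (incompGraph V).dist x y ∧
    (incompGraph V).dist x y ≤ (incompGraph V).dist x z + (incompGraph V).dist z y ∧
    (incompGraph V).dist x z + (incompGraph V).dist z y ≤ (incompGraph V).dist x y + 2 :=
  stmt9_general x z y hxz hzy hrxy
end

section
/- Let P = (V, ≤) be a poset, G its incomparability graph, and x < y with x connected to y in G, d_G(x,y) = r ≥ 2. If x_0 = x, x_1, ..., x_r = y is a shortest path in G from x to y, then there exists an index i with 0 < i < r such that z is incomparable to x_i, for any fixed z with x < z < y. -/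
theorem incompGraph.exists_incomparable_of_not_le_of_le {V : Type*} [PartialOrder V]
    (z : V) (p : ℕ → V) (r : ℕ) (hadj : ∀ i < r, (incompGraph V).Adj (p i) (p (i + 1)))
    (h0 : ¬ z ≤ p 0) (hr : z ≤ p r) :
    ∃ i < r, ¬ z ≤ p i ∧ ¬ p i ≤ z := by
  induction r with
  | zero => exact absurd hr h0
  | succ r ih =>
    by_cases hzr : z ≤ p r
    · obtain ⟨i, hi, hinc⟩ := ih (fun i hi => hadj i (by omega)) hzr
      exact ⟨i, by omega, hinc⟩
    -- `p r` is not below `z` either: `p (r + 1)` is above `z` and incomparable to `p r`.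
    · refine ⟨r, r.lt_succ_self, hzr, fun hrz => ?_⟩
      exact (hadj r r.lt_succ_self).1 (hrz.trans hr)

theorem stmt10_general {V : Type*} [PartialOrder V] (x y z : V) (r : ℕ)
    (hxz : x < z) (hzy : z < y)
    (p : ℕ → V) (hp0 : p 0 = x) (hpr : p r = y)
    (hadj : ∀ i < r, (incompGraph V).Adj (p i) (p (i + 1))) :
    ∃ i : ℕ, 0 < i ∧ i < r ∧ ¬ z ≤ p i ∧ ¬ p i ≤ z := by
  obtain ⟨i, hir, hzi, hiz⟩ := incompGraph.exists_incomparable_of_not_le_of_le z p r hadj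
    (hp0 ▸ hxz.not_ge) (hpr ▸ hzy.le)
  have hi : i ≠ 0 := by
    rintro rfl
    exact hiz (hp0 ▸ hxz.le)
  exact ⟨i, Nat.pos_of_ne_zero hi, hir, hzi, hiz⟩

theorem stmt10 {V : Type*} [PartialOrder V] (x y z : V) (r : ℕ)
    (hxy : x < y) (hxz : x < z) (hzy : z < y)
    (hr : r = (incompGraph V).dist x y) (hr2 : 2 ≤ r)
    (p : ℕ → V) (hp0 : p 0 = x) (hpr : p r = y)
    (hadj : ∀ i < r, (incompGraph V).Adj (p i) (p (i + 1))) :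
    ∃ i : ℕ, 0 < i ∧ i < r ∧ ¬ z ≤ p i ∧ ¬ p i ≤ z :=
  stmt10_general x y z r hxz hzy p hp0 hpr hadj
end

section
/- Let P be a poset and G its incomparability graph. If a ball B_G(x, r) (with r ∈ ℕ) contains infinitely many vertices of a one-way infinite induced path of G, then it contains all but finitely many vertices of that path. -/
/-!
Balls of the incomparability graph are order-convex: let `p ≤ u ≤ q` with `p, q` in the ball
around `x`. On a shortest walk from `x` to `q`, the last vertex not above `u` is incomparable to
`u`, so the walk can be rerouted to `u` without getting longer; if there is no such vertex, then
`u ≤ x`. Dually, using `p`, either `u` is in the ball or `x ≤ u`, and `u = x` is in the ball anyway.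
Along an induced ray, vertices at index distance at least two are comparable, which forces the ray
to be monotone or antitone at gap two. Hence once the ball contains `a n₀` and vertices of
arbitrarily large index, it contains every `a k` with `k ≥ n₀ + 2`.
-/

namespace SimpleGraph

variable {V W : Type*} {G : SimpleGraph V} {G' : SimpleGraph W}

lemma Hom.edist_map_le (f : G →g G') (u v : V) : G'.edist (f u) (f v) ≤ G.edist u v := by
  by_cases huv : G.Reachable u v
  · obtain ⟨w, hw⟩ := huv.exists_walk_length_eq_edist
    rw [← hw, ← w.length_map f]
    exact G'.edist_le (w.map f)
  · rw [edist_eq_top_of_not_reachable huv]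
    exact le_top

lemma Iso.edist_map (e : G ≃g G') (u v : V) : G'.edist (e u) (e v) = G.edist u v := by
  refine le_antisymm (Hom.edist_map_le e.toHom u v) ?_
  simpa using Hom.edist_map_le e.symm.toHom (e u) (e v)

end SimpleGraph

namespace incompGraph

open SimpleGraph

variable {V : Type*} [PartialOrder V]

def isoToDual : incompGraph V ≃g incompGraph Vᵒᵈ where
  toEquiv := OrderDual.toDual
  map_rel_iff' := and_comm

lemma edist_le_length_or_le {x q u : V} (w : (incompGraph V).Walk x q) (hu : u ≤ q) :
    (incompGraph V).edist x u ≤ w.length ∨ u ≤ x := by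
  induction w with
  | nil => exact Or.inr hu
  | @cons x v q hxv p ih =>
    rcases ih hu with hvu | huv
    · left
      calc (incompGraph V).edist x u
          ≤ (incompGraph V).edist x v + (incompGraph V).edist v u := SimpleGraph.edist_triangle
        _ ≤ 1 + p.length := by gcongr; exact (edist_eq_one_iff_adj.2 hxv).le
        _ = (p.cons hxv).length := by simp [add_comm]
    · by_cases hux : u ≤ x
      · exact Or.inr hux
      · have hxu : ¬ x ≤ u := fun hxu => hxv.1 (hxu.trans huv)
        left
        calc (incompGraph V).edist x u = 1 := edist_eq_one_iff_adj.2 ⟨hxu, hux⟩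
          _ ≤ (p.cons hxv).length := by simp

lemma edist_le_or_le_of_le {x q u : V} (hu : u ≤ q) :
    (incompGraph V).edist x u ≤ (incompGraph V).edist x q ∨ u ≤ x := by
  by_cases hxq : (incompGraph V).Reachable x q
  · obtain ⟨w, hw⟩ := hxq.exists_walk_length_eq_edist
    rw [← hw]
    exact edist_le_length_or_le w hu
  · rw [edist_eq_top_of_not_reachable hxq]
    exact Or.inl le_top

lemma edist_le_or_le_of_ge {x p u : V} (hu : p ≤ u) :
    (incompGraph V).edist x u ≤ (incompGraph V).edist x p ∨ x ≤ u := by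
  have h := edist_le_or_le_of_le (V := Vᵒᵈ) (x := isoToDual x) (q := isoToDual p)
    (u := isoToDual u) hu
  rwa [Iso.edist_map, Iso.edist_map] at h

lemma edist_le_of_le_of_le_s12 {x p q u : V} {r : ℕ∞}
    (hp : (incompGraph V).edist x p ≤ r) (hq : (incompGraph V).edist x q ≤ r)
    (hpu : p ≤ u) (huq : u ≤ q) : (incompGraph V).edist x u ≤ r := by
  rcases edist_le_or_le_of_le (x := x) huq with h | hux
  · exact h.trans hq
  rcases edist_le_or_le_of_ge (x := x) hpu with h | hxu
  · exact h.trans hp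
  simp [le_antisymm hux hxu]

section Ray

variable {a : ℕ → V}

lemma ray_le_or_le (hpath : ∀ i j, (incompGraph V).Adj (a i) (a j) ↔ (i + 1 = j ∨ j + 1 = i))
    {i j : ℕ} (hij : i + 2 ≤ j) : a i ≤ a j ∨ a j ≤ a i := by
  by_contra! h
  rcases (hpath i j).1 h with h | h <;> omega

lemma ray_le_succ_of_le
    (hpath : ∀ i j, (incompGraph V).Adj (a i) (a j) ↔ (i + 1 = j ∨ j + 1 = i))
    {i j : ℕ} (hij : i + 2 ≤ j) (h : a i ≤ a j) : a i ≤ a (j + 1) :=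
  (ray_le_or_le hpath (by omega)).resolve_right
    fun h' => ((hpath j (j + 1)).2 (Or.inl rfl)).2 (h'.trans h)

lemma ray_le_of_le_two
    (hpath : ∀ i j, (incompGraph V).Adj (a i) (a j) ↔ (i + 1 = j ∨ j + 1 = i))
    (h02 : a 0 ≤ a 2) {i j : ℕ} (hij : i + 2 ≤ j) : a i ≤ a j := by
  have step : ∀ i, a i ≤ a (i + 2) := by
    intro i
    induction i with
    | zero => exact h02
    | succ i ih =>
      have hi3 : a i ≤ a (i + 3) := ray_le_succ_of_le hpath le_rfl ih
      exact (ray_le_or_le hpath le_rfl).resolve_right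
        fun h => ((hpath i (i + 1)).2 (Or.inl rfl)).1 (hi3.trans h)
  induction j, hij using Nat.le_induction with
  | base => exact step i
  | succ j hij ih => exact ray_le_succ_of_le hpath hij ih

lemma ray_le_or_ge (hpath : ∀ i j, (incompGraph V).Adj (a i) (a j) ↔ (i + 1 = j ∨ j + 1 = i)) :
    (∀ i j, i + 2 ≤ j → a i ≤ a j) ∨ (∀ i j, i + 2 ≤ j → a j ≤ a i) := by
  rcases ray_le_or_le hpath (le_refl 2) with h02 | h20
  · exact Or.inl fun i j => ray_le_of_le_two hpath h02
  · have hpath_dual (i j : ℕ) := isoToDual.map_rel_iff.trans (hpath i j)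
    exact Or.inr fun i j => ray_le_of_le_two (a := fun n => isoToDual (a n)) hpath_dual h20

end Ray

end incompGraph

theorem stmt12_general {V : Type*} [PartialOrder V] (a : ℕ → V)
    (hpath : ∀ i j : ℕ, (incompGraph V).Adj (a i) (a j) ↔ (i + 1 = j ∨ j + 1 = i))
    (x : V) (r : ℕ)
    (hinf : {n : ℕ | (incompGraph V).edist x (a n) ≤ (r : ℕ∞)}.Infinite) :
    {n : ℕ | ¬ (incompGraph V).edist x (a n) ≤ (r : ℕ∞)}.Finite := by
  obtain ⟨n₀, hn₀⟩ := hinf.nonempty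
  refine (Set.finite_Iio (n₀ + 2)).subset fun k hk => Set.mem_Iio.2 ?_
  by_contra! hkn₀
  obtain ⟨m, hm, hkm⟩ := hinf.exists_gt (k + 1)
  rcases incompGraph.ray_le_or_ge hpath with hmono | hanti
  · exact hk (incompGraph.edist_le_of_le_of_le_s12 hn₀ hm (hmono n₀ k hkn₀) (hmono k m (by omega)))
  · exact hk (incompGraph.edist_le_of_le_of_le_s12 hm hn₀ (hanti k m (by omega)) (hanti n₀ k hkn₀))

theorem stmt12 {V : Type*} [PartialOrder V] (a : ℕ → V)
    (hinj : Function.Injective a)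
    (hpath : ∀ i j : ℕ, (incompGraph V).Adj (a i) (a j) ↔ (i + 1 = j ∨ j + 1 = i))
    (x : V) (r : ℕ)
    (hinf : {n : ℕ | (incompGraph V).edist x (a n) ≤ (r : ℕ∞)}.Infinite) :
    {n : ℕ | ¬ (incompGraph V).edist x (a n) ≤ (r : ℕ∞)}.Finite :=
  stmt12_general a hpath x r hinf
end

section
/- Let P = (V, ≤) be a poset whose incomparability graph G is connected, and let x ∈ V be such that {d_G(x, y) : x < y} is unbounded in ℕ. Then for every z ∈ V with x < z, the set {d_G(z, y) : z < y} is also unbounded in ℕ. In particular z is not maximal in P. -/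
namespace incompGraph

variable {V : Type*} [PartialOrder V]

lemma lt_or_lt_of_two_le_dist {a b : V} (h : 2 ≤ (incompGraph V).dist a b) : a < b ∨ b < a := by
  have hne : a ≠ b := by rintro rfl; simp at h
  have hnadj : ¬ (incompGraph V).Adj a b := fun hadj => by
    rw [SimpleGraph.dist_eq_one_iff_adj.mpr hadj] at h
    omega
  have hcomp : a ≤ b ∨ b ≤ a := by
    by_contra! hc
    exact hnadj hc
  exact hcomp.imp (·.lt_of_ne hne) (·.lt_of_ne hne.symm)

lemma dist_le_length_of_lt {a b w : V} (p : (incompGraph V).Walk b w) (hab : a < b)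
    (haw : ¬ a < w) : (incompGraph V).dist a w ≤ p.length := by
  induction p with
  | nil => exact absurd hab haw
  | @cons b c w hbc q ih =>
    have hca : ¬ c ≤ a := fun hca => hbc.2 (hca.trans hab.le)
    by_cases hac : a ≤ c
    · have hac' : a < c := hac.lt_of_ne (by rintro rfl; exact hca le_rfl)
      calc (incompGraph V).dist a w ≤ q.length := ih hac' haw
        _ ≤ (q.cons hbc).length := by simp
    · exact SimpleGraph.dist_le (q.cons (show (incompGraph V).Adj a c from ⟨hac, hca⟩))

lemma dist_le_dist_of_lt {a b w : V} (hbw : (incompGraph V).Reachable b w) (hab : a < b)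
    (haw : ¬ a < w) : (incompGraph V).dist a w ≤ (incompGraph V).dist b w := by
  obtain ⟨p, hp⟩ := hbw.exists_walk_length_eq_dist
  exact hp ▸ dist_le_length_of_lt p hab haw

lemma exists_lt_le_dist (hconn : (incompGraph V).Connected) {x : V}
    (hx : ∀ n : ℕ, ∃ y : V, x < y ∧ n ≤ (incompGraph V).dist x y) (z : V) (n : ℕ) :
    ∃ y : V, z < y ∧ n ≤ (incompGraph V).dist z y := by
  obtain ⟨y, hxy, hy⟩ := hx (n + (incompGraph V).dist x z + 2)
  have htri : (incompGraph V).dist x y ≤ (incompGraph V).dist x z + (incompGraph V).dist z y :=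
    hconn.dist_triangle
  refine (lt_or_lt_of_two_le_dist (by omega)).elim (fun hzy => ⟨y, hzy, by omega⟩) fun hyz => ?_
  have hyx := dist_le_dist_of_lt (hconn z x) hyz hxy.asymm
  rw [SimpleGraph.dist_comm, (incompGraph V).dist_comm (u := z)] at hyx
  omega

end incompGraph

theorem stmt14 {V : Type*} [PartialOrder V]
    (hconn : (incompGraph V).Connected) (x : V)
    (hx : ∀ n : ℕ, ∃ y : V, x < y ∧ n ≤ (incompGraph V).dist x y) :
    ∀ z : V, x < z →
      (∀ n : ℕ, ∃ y : V, z < y ∧ n ≤ (incompGraph V).dist z y) ∧ ¬ IsMax z := by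
  intro z _
  have hz := incompGraph.exists_lt_le_dist hconn hx z
  refine ⟨hz, fun hmax => ?_⟩
  obtain ⟨y, hzy, -⟩ := hz 0
  exact hzy.not_ge (hmax hzy.le)
end

section
/- Let P = (V, ≤) be an interval order (a poset not embedding 2 ⊕ 2) and x ∈ V. Consider vertices y incomparable to x such that there exists an induced path x = x_0, x_1 = y, x_2, ..., x_n of length n ≥ 2 in the incomparability graph of P, all of whose vertices lie in {z : z incomparable to x} ∪ {z : x ≤ z}. Then the set of all such vertices y forms an antichain in P. -/
def IsTwoPlusTwoFree (V : Type*) [PartialOrder V] : Prop :=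
  ¬ ∃ a b c d : V, a < b ∧ c < d ∧
    ¬ a ≤ c ∧ ¬ c ≤ a ∧ ¬ a ≤ d ∧ ¬ d ≤ a ∧
    ¬ b ≤ c ∧ ¬ c ≤ b ∧ ¬ b ≤ d ∧ ¬ d ≤ b

section

variable {V : Type*} [PartialOrder V]

theorem IsTwoPlusTwoFree.not_lt_of_incompGraph_adj (hfree : IsTwoPlusTwoFree V)
    {x z y₁ y₂ : V} (hxz : x < z) (hxy₁ : (incompGraph V).Adj x y₁)
    (hxy₂ : (incompGraph V).Adj x y₂) (hy₁z : (incompGraph V).Adj y₁ z) : ¬ y₁ < y₂ := by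
  intro hy
  have hy₂z : (incompGraph V).Adj y₂ z :=
    ⟨fun h => hy₁z.1 (hy.le.trans h), fun h => hxy₂.1 (hxz.le.trans h)⟩
  exact hfree ⟨x, z, y₁, y₂, hxz, hy, hxy₁.1, hxy₁.2, hxy₂.1, hxy₂.2,
    hy₁z.2, hy₁z.1, hy₂z.2, hy₂z.1⟩

theorem lt_third_of_isInducedPath {x : V} {n : ℕ} {p : ℕ → V} (hn : 2 ≤ n) (h0 : p 0 = x)
    (hcmp : ∀ i ≤ n, (¬ x ≤ p i ∧ ¬ p i ≤ x) ∨ x ≤ p i)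
    (hinj : ∀ i ≤ n, ∀ j ≤ n, p i = p j → i = j)
    (hadj : ∀ i ≤ n, ∀ j ≤ n, (incompGraph V).Adj (p i) (p j) ↔ (i + 1 = j ∨ j + 1 = i)) :
    x < p 2 := by
  have hnot : ¬ (incompGraph V).Adj x (p 2) := by
    rw [← h0, hadj 0 (by omega) 2 hn]
    omega
  have hle : x ≤ p 2 := (hcmp 2 hn).resolve_left hnot
  have hne : x ≠ p 2 := fun h => by
    have := hinj 0 (by omega) 2 hn (h0.trans h)
    omega
  exact lt_of_le_of_ne hle hne

end

theorem stmt16 {V : Type*} [PartialOrder V]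
    (hint : ¬ ∃ a b c d : V, a < b ∧ c < d ∧
        ¬ a ≤ c ∧ ¬ c ≤ a ∧ ¬ a ≤ d ∧ ¬ d ≤ a ∧
        ¬ b ≤ c ∧ ¬ c ≤ b ∧ ¬ b ≤ d ∧ ¬ d ≤ b)
    (x : V) :
    IsAntichain (· ≤ ·)
      {y : V | ∃ (n : ℕ) (p : ℕ → V), 2 ≤ n ∧ p 0 = x ∧ p 1 = y ∧
        (∀ i ≤ n, (¬ x ≤ p i ∧ ¬ p i ≤ x) ∨ x ≤ p i) ∧
        (∀ i ≤ n, ∀ j ≤ n, p i = p j → i = j) ∧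
        (∀ i ≤ n, ∀ j ≤ n,
          (incompGraph V).Adj (p i) (p j) ↔ (i + 1 = j ∨ j + 1 = i))} := by
  rintro _ ⟨n, p, hn, h0, rfl, hcmp, hinj, hadj⟩ _ ⟨m, q, hm, g0, rfl, -, -, gadj⟩ hne hle
  have hxy₁ : (incompGraph V).Adj x (p 1) := h0 ▸ (hadj 0 (by omega) 1 (by omega)).2 (by omega)
  have hxy₂ : (incompGraph V).Adj x (q 1) := g0 ▸ (gadj 0 (by omega) 1 (by omega)).2 (by omega)
  have hy₁z : (incompGraph V).Adj (p 1) (p 2) := (hadj 1 (by omega) 2 hn).2 (by omega)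
  exact IsTwoPlusTwoFree.not_lt_of_incompGraph_adj hint
    (lt_third_of_isInducedPath hn h0 hcmp hinj hadj) hxy₁ hxy₂ hy₁z (lt_of_le_of_ne hle hne)
end

section
/- Let P = (V, ≤) be a poset, G its incomparability graph, X ⊆ V, and r ∈ ℕ. Then B_G(↓X, r) = (↓X) ∪ B_G(X, r) = ↓(B_G(X, r)), where ↓X denotes the downward closure of X in P. -/
/-- `ballSet G X r` is the set of vertices at graphic distance at most `r`
from some vertex of `X` (distance `⊤` if no path exists). -/
def ballSet {V : Type*} (G : SimpleGraph V) (X : Set V) (r : ℕ) : Set V :=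
  {v | ∃ x ∈ X, G.edist v x ≤ (r : ℕ∞)}

/-- The downward closure of a set in a poset. -/
def downSet {V : Type*} [PartialOrder V] (X : Set V) : Set V :=
  {y | ∃ x ∈ X, y ≤ x}

/-! An edge `a ∼ b` of the incomparability graph with `a ≰ c` and `b ≤ c` already makes `a`
incomparable to `c`, since `c ≤ a` would give `b ≤ a`. So a walk from `v ≰ c` to some `y ≤ c` can be
cut at its first entry into `Iic c` and redirected to `c`, giving `d(v, c) ≤ d(v, y)`; dually for
`Ici c`. The two nontrivial inclusions of the theorem follow from this. -/

namespace SimpleGraph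

variable {V : Type*} {G : SimpleGraph V} {S : Set V} {c : V}

theorem Walk.exists_walk_length_le_of_forall_adj_mem
    (hS : ∀ ⦃a b⦄, G.Adj a b → a ∉ S → b ∈ S → G.Adj a c) :
    ∀ {v y : V} (p : G.Walk v y), v ∉ S → y ∈ S → ∃ q : G.Walk v c, q.length ≤ p.length
  | _, _, .nil, hv, hy => absurd hy hv
  | _, _, .cons (v := w) hadj p, hv, hy => by
    by_cases hw : w ∈ S
    · exact ⟨.cons (hS hadj hv hw) .nil, by simp⟩
    · obtain ⟨q, hq⟩ := exists_walk_length_le_of_forall_adj_mem hS p hw hy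
      exact ⟨.cons hadj q, by simpa using hq⟩

theorem edist_le_edist_of_forall_adj_mem
    (hS : ∀ ⦃a b⦄, G.Adj a b → a ∉ S → b ∈ S → G.Adj a c) {v y : V} (hv : v ∉ S) (hy : y ∈ S) :
    G.edist v c ≤ G.edist v y :=
  le_iInf fun p => by
    obtain ⟨q, hq⟩ := p.exists_walk_length_le_of_forall_adj_mem hS hv hy
    exact (edist_le q).trans (by exact_mod_cast hq)

end SimpleGraph

theorem subset_ballSet {V : Type*} (G : SimpleGraph V) (X : Set V) (r : ℕ) : X ⊆ ballSet G X r :=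
  fun x hx => ⟨x, hx, by simp⟩

section IncompGraph

variable {V : Type*} [PartialOrder V]

theorem incompGraph_edist_le_of_le {v y c : V} (hv : ¬ v ≤ c) (hy : y ≤ c) :
    (incompGraph V).edist v c ≤ (incompGraph V).edist v y :=
  SimpleGraph.edist_le_edist_of_forall_adj_mem (G := incompGraph V) (S := Set.Iic c)
    (fun _ _ hab ha hb => ⟨ha, fun hca => hab.2 (hb.trans hca)⟩) hv hy

theorem incompGraph_edist_le_of_ge {v y c : V} (hv : ¬ c ≤ v) (hy : c ≤ y) :
    (incompGraph V).edist v c ≤ (incompGraph V).edist v y :=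
  SimpleGraph.edist_le_edist_of_forall_adj_mem (G := incompGraph V) (S := Set.Ici c)
    (fun _ _ hab ha hb => ⟨fun hac => hab.1 (hac.trans hb), ha⟩) hv hy

theorem subset_downSet (X : Set V) : X ⊆ downSet X :=
  fun x hx => ⟨x, hx, le_rfl⟩

theorem downSet_mono {X Y : Set V} (h : X ⊆ Y) : downSet X ⊆ downSet Y :=
  fun _ ⟨x, hx, hvx⟩ => ⟨x, h hx, hvx⟩

theorem ballSet_downSet_subset (X : Set V) (r : ℕ) :
    ballSet (incompGraph V) (downSet X) r ⊆ downSet X ∪ ballSet (incompGraph V) X r := by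
  rintro v ⟨y, ⟨x, hx, hyx⟩, hvy⟩
  by_cases hvx : v ≤ x
  · exact Or.inl ⟨x, hx, hvx⟩
  · exact Or.inr ⟨x, hx, (incompGraph_edist_le_of_le hvx hyx).trans hvy⟩

theorem downSet_ballSet_subset (X : Set V) (r : ℕ) :
    downSet (ballSet (incompGraph V) X r) ⊆ ballSet (incompGraph V) (downSet X) r := by
  rintro v ⟨w, ⟨x, hx, hwx⟩, hvw⟩
  by_cases hvx : v ≤ x
  · exact subset_ballSet _ (downSet X) r ⟨x, hx, hvx⟩
  · refine ⟨x, subset_downSet X hx, ?_⟩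
    rw [SimpleGraph.edist_comm] at hwx ⊢
    exact (incompGraph_edist_le_of_ge hvx hvw).trans hwx

end IncompGraph

theorem stmt18 {V : Type*} [PartialOrder V] (X : Set V) (r : ℕ) :
    ballSet (incompGraph V) (downSet X) r = downSet X ∪ ballSet (incompGraph V) X r ∧
    ballSet (incompGraph V) (downSet X) r = downSet (ballSet (incompGraph V) X r) := by
  have union_subset : downSet X ∪ ballSet (incompGraph V) X r ⊆
      downSet (ballSet (incompGraph V) X r) :=
    Set.union_subset (downSet_mono (subset_ballSet _ X r)) (subset_downSet _)
  exact ⟨(ballSet_downSet_subset X r).antisymm (union_subset.trans (downSet_ballSet_subset X r)),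
    ((ballSet_downSet_subset X r).trans union_subset).antisymm (downSet_ballSet_subset X r)⟩
end
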